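/- arXiv:2605.03071 — 8 statements merged into one kernel-verified Lean document; each statement's English description precedes it below -/
import Mathlib

section
/- Let ε ∈ (0,1], f(O) ∈ ℝ≥0, and let q : [ε,1] → ℝ be a function that is continuous on (ε,1), left continuous at 1, right continuous at ε, satisfies q(ε) ≥ 0, and such that for every t ∈ [ε,1) the right derivative of q at t exists and satisfies ∂₊q(t) ≥ f(O) − q(t). Then q(1) ≥ (1 − e^{−(1−ε)})·f(O). -/
theorem stmt1 (ε fO : ℝ) (hε : ε ∈ Set.Ioc (0:ℝ) 1) (hfO : 0 ≤ fO)
    (q : ℝ → ℝ)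
    (hcont : ContinuousOn q (Set.Ioo ε 1))
    (hleft : ContinuousWithinAt q (Set.Iic 1) 1)
    (hright : ContinuousWithinAt q (Set.Ici ε) ε)
    (h0 : 0 ≤ q ε)
    (hderiv : ∀ t ∈ Set.Ico ε 1, ∃ d : ℝ,
      HasDerivWithinAt q d (Set.Ici t) t ∧ fO - q t ≤ d) :
    (1 - Real.exp (-(1 - ε))) * fO ≤ q 1 := by
  obtain ⟨hε0, hε1⟩ := hε
  -- continuity of q on [ε,1]
  have hqc : ContinuousOn q (Set.Icc ε 1) := by
    intro x hx
    rcases eq_or_lt_of_le hx.1 with h1 | h1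
    · subst h1; exact hright.mono (fun y hy => hy.1)
    rcases eq_or_lt_of_le hx.2 with h2 | h2
    · subst h2; exact hleft.mono (fun y hy => hy.2)
    · exact (hcont.continuousAt (Ioo_mem_nhds h1 h2)).continuousWithinAt
  -- choose the right derivative
  choose d hd hdle using hderiv
  set f : ℝ → ℝ := fun t => fO * Real.exp t - Real.exp t * q t with hf
  set f' : ℝ → ℝ := fun t => fO * Real.exp t -
      (Real.exp t * q t + Real.exp t * (if h : t ∈ Set.Ico ε 1 then d t h else 0)) with hf'
  have key : ∀ ⦃x⦄, x ∈ Set.Icc ε 1 → f x ≤ (fun _ => f ε) x := by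
    apply image_le_of_deriv_right_le_deriv_boundary (f := f) (f' := f') (B := fun _ => f ε) (B' := fun _ => (0:ℝ))
    · exact (continuousOn_const.mul Real.continuousOn_exp).sub
        (Real.continuousOn_exp.mul hqc)
    · intro x hx
      have hdx := hd x hx
      have h1 : HasDerivWithinAt (fun t => fO * Real.exp t) (fO * Real.exp x) (Set.Ici x) x :=
        ((Real.hasDerivAt_exp x).const_mul fO).hasDerivWithinAt
      have h2 : HasDerivWithinAt (fun t => Real.exp t * q t)
          (Real.exp x * q x + Real.exp x * d x hx) (Set.Ici x) x := by
        have := ((Real.hasDerivAt_exp x).hasDerivWithinAt (s := Set.Ici x)).mul hdx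
        exact this
      have := h1.sub h2
      have hfx : f' x = fO * Real.exp x - (Real.exp x * q x + Real.exp x * d x hx) := by
        simp only [f', dif_pos hx]
      rw [hfx]; exact this
    · exact le_refl _
    · exact continuousOn_const
    · intro x hx; exact hasDerivWithinAt_const x _ (f ε)
    · intro x hx
      have hle := hdle x hx
      have hexp : (0:ℝ) < Real.exp x := Real.exp_pos x
      simp only [f', hx, dif_pos]
      nlinarith [hdle x hx, Real.exp_pos x]
  have h1mem : (1:ℝ) ∈ Set.Icc ε 1 := ⟨hε1, le_refl 1⟩
  have hkey := key h1mem
  simp only [f] at hkey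
  -- f 1 ≤ f ε : fO * e - e * q 1 ≤ fO * e^ε - e^ε * q ε
  have heps : (0:ℝ) < Real.exp ε := Real.exp_pos ε
  have he1 : (0:ℝ) < Real.exp 1 := Real.exp_pos 1
  have hq1 : fO - fO * Real.exp ε / Real.exp 1 ≤ q 1 := by
    have h2 : fO * Real.exp ε - Real.exp ε * q ε ≤ fO * Real.exp ε := by nlinarith
    have h3 : fO * Real.exp 1 - Real.exp 1 * q 1 ≤ fO * Real.exp ε := le_trans hkey h2
    have h4 : fO * Real.exp ε / Real.exp 1 * Real.exp 1 = fO * Real.exp ε :=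
      div_mul_cancel₀ _ (ne_of_gt he1)
    nlinarith [h3, he1, h4]
  have hexp_eq : Real.exp (-(1 - ε)) = Real.exp ε / Real.exp 1 := by
    rw [Real.exp_neg, Real.exp_sub]
    field_simp
  calc (1 - Real.exp (-(1 - ε))) * fO
      = fO - fO * (Real.exp ε / Real.exp 1) := by rw [hexp_eq]; ring
    _ ≤ q 1 := by simpa [mul_div_assoc] using hq1
end

section
/- Let ε ∈ (0,1], β ∈ (0,1], η ≥ 0, and f(O) ∈ ℝ≥0, and let q : [ε,1] → ℝ be a function that is continuous on (ε,1), left continuous at 1, right continuous at ε, satisfies q(ε) ≥ 0, and such that for every t ∈ [ε,1) the right derivative of q at t exists and satisfies ∂₊q(t) ≥ (β − η)·f(O) − β·q(t). Then q(1) ≥ (1 − η/β)·(1 − e^{−β(1−ε)})·f(O). -/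
open Set

theorem stmt2 (ε β η fO : ℝ) (hε : ε ∈ Set.Ioc (0:ℝ) 1)
    (hβ : β ∈ Set.Ioc (0:ℝ) 1) (hη : 0 ≤ η) (hfO : 0 ≤ fO)
    (q : ℝ → ℝ)
    (hcont : ContinuousOn q (Set.Ioo ε 1))
    (hleft : ContinuousWithinAt q (Set.Iic 1) 1)
    (hright : ContinuousWithinAt q (Set.Ici ε) ε)
    (h0 : 0 ≤ q ε)
    (hderiv : ∀ t ∈ Set.Ico ε 1, ∃ d : ℝ,
      HasDerivWithinAt q d (Set.Ici t) t ∧ (β - η) * fO - β * q t ≤ d) :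
    (1 - η / β) * (1 - Real.exp (-β * (1 - ε))) * fO ≤ q 1 := by
  obtain ⟨hβ0, hβ1⟩ := hβ
  obtain ⟨hε0, hε1⟩ := hε
  have hβne : β ≠ 0 := ne_of_gt hβ0
  set c : ℝ := (β - η) * fO / β with hc
  set h : ℝ → ℝ := fun t => (q t - c) * Real.exp (β * t) with hh
  -- continuity of q on Icc ε 1
  have hqcont : ContinuousOn q (Icc ε 1) := by
    intro x hx
    rcases eq_or_lt_of_le hx.1 with h1 | h1
    · subst h1; exact hright.mono Icc_subset_Ici_self
    rcases eq_or_lt_of_le hx.2 with h2 | h2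
    · subst h2; exact hleft.mono Icc_subset_Iic_self
    · exact ((hcont x ⟨h1, h2⟩).continuousAt
        (isOpen_Ioo.mem_nhds ⟨h1, h2⟩)).continuousWithinAt
  have hhcont : ContinuousOn h (Icc ε 1) :=
    (hqcont.sub continuousOn_const).mul
      (Real.continuous_exp.comp (continuous_const.mul continuous_id)).continuousOn
  -- choose derivative
  classical
  set d : ℝ → ℝ := fun t => if ht : t ∈ Ico ε 1 then (hderiv t ht).choose else 0 with hd
  have hd1 : ∀ t ∈ Ico ε 1, HasDerivWithinAt q (d t) (Ici t) t := by
    intro t ht; simp only [hd, dif_pos ht]; exact (hderiv t ht).choose_spec.1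
  have hd2 : ∀ t ∈ Ico ε 1, (β - η) * fO - β * q t ≤ d t := by
    intro t ht; simp only [hd, dif_pos ht]; exact (hderiv t ht).choose_spec.2
  set h' : ℝ → ℝ := fun t => d t * Real.exp (β * t) + (q t - c) * (β * Real.exp (β * t))
    with hh'
  have hhderiv : ∀ t ∈ Ico ε 1, HasDerivWithinAt h (h' t) (Ici t) t := by
    intro t ht
    have he : HasDerivWithinAt (fun t => Real.exp (β * t)) (β * Real.exp (β * t))
        (Ici t) t := by
      have := (Real.hasDerivAt_exp (β * t)).comp t ((hasDerivAt_id t).const_mul β)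
      exact this.hasDerivWithinAt.congr_deriv (by ring)
    exact ((hd1 t ht).sub_const c).mul he
  have hnonneg : ∀ t ∈ Ico ε 1, 0 ≤ h' t := by
    intro t ht
    have hexp : 0 < Real.exp (β * t) := Real.exp_pos _
    have : (β - η) * fO - β * c ≤ d t + β * (q t - c) := by
      have := hd2 t ht; nlinarith
    have hc0 : β * c = (β - η) * fO := by rw [hc]; field_simp
    have h1 : 0 ≤ d t + β * (q t - c) := by nlinarith
    have : h' t = (d t + β * (q t - c)) * Real.exp (β * t) := by ring
    rw [this]; positivity
  -- apply fencing theorem to f = -h, B = const (-h ε)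
  have key : -h 1 ≤ -h ε := by
    have := image_le_of_deriv_right_le_deriv_boundary
      (f := fun t => -h t) (f' := fun t => -h' t) (a := ε) (b := 1)
      (hhcont.neg)
      (fun x hx => (hhderiv x hx).neg)
      (B := fun _ => -h ε) (B' := fun _ => 0)
      (le_refl _)
      continuousOn_const
      (fun x _ => hasDerivWithinAt_const _ _ _)
      (fun x hx => by simpa using hnonneg x hx)
    exact this ⟨hε1, le_refl 1⟩
  have hεh : h ε ≤ h 1 := by linarith
  -- unfold
  have hE : Real.exp (β * ε) ≤ Real.exp (β * 1) := by
    apply Real.exp_le_exp.2; nlinarith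
  have hεlow : -c * Real.exp (β * ε) ≤ h ε := by
    have : -c * Real.exp (β * ε) ≤ (q ε - c) * Real.exp (β * ε) := by
      have := Real.exp_pos (β * ε); nlinarith
    simpa [hh] using this
  have hfin : -c * Real.exp (β * ε) ≤ (q 1 - c) * Real.exp (β * 1) := by
    calc -c * Real.exp (β * ε) ≤ h ε := hεlow
    _ ≤ h 1 := hεh
    _ = (q 1 - c) * Real.exp (β * 1) := rfl
  -- conclude
  have hexp1 : 0 < Real.exp (β * 1) := Real.exp_pos _
  have hgoal : c * (1 - Real.exp (-β * (1 - ε))) ≤ q 1 := by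
    have hratio : Real.exp (-β * (1 - ε)) = Real.exp (β * ε) / Real.exp (β * 1) := by
      rw [eq_div_iff (ne_of_gt hexp1), ← Real.exp_add]; ring_nf
    rw [hratio]
    apply le_of_mul_le_mul_right _ hexp1
    calc c * (1 - Real.exp (β * ε) / Real.exp (β * 1)) * Real.exp (β * 1)
        = c * Real.exp (β * 1) - c * Real.exp (β * ε) := by field_simp
      _ ≤ q 1 * Real.exp (β * 1) := by nlinarith [hfin]
  have htarget : (1 - η / β) * (1 - Real.exp (-β * (1 - ε))) * fO
      = c * (1 - Real.exp (-β * (1 - ε))) := by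
    rw [hc]; field_simp
  linarith [hgoal, htarget.le, htarget.ge]
end

section
/- Let ε ∈ (0,1], f(O) ∈ ℝ≥0, and let q : [ε,1] → ℝ be a function that is continuous on (ε,1), left continuous at 1, right continuous at ε, with q(ε) ≥ 0, such that for every t ∈ [ε,1) the right derivative of q at t exists and satisfies the strict inequality ∂₊q(t) > f(O) − q(t). Then there is no time s ∈ [ε,1) at which q first falls below the curve t ↦ (1 − e^{−(t−ε)})·f(O); consequently q(1) ≥ (1 − e^{−(1−ε)})·f(O). -/
open Set

theorem stmt3 (ε fO : ℝ) (hε : ε ∈ Set.Ioc (0:ℝ) 1) (hfO : 0 ≤ fO)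
    (q : ℝ → ℝ)
    (hcont : ContinuousOn q (Set.Ioo ε 1))
    (hleft : ContinuousWithinAt q (Set.Iic 1) 1)
    (hright : ContinuousWithinAt q (Set.Ici ε) ε)
    (h0 : 0 ≤ q ε)
    (hderiv : ∀ t ∈ Set.Ico ε 1, ∃ d : ℝ,
      HasDerivWithinAt q d (Set.Ici t) t ∧ fO - q t < d) :
    sSup {t | t ∈ Set.Icc ε 1 ∧ (1 - Real.exp (-(t - ε))) * fO ≤ q t} = 1
      ∧ (1 - Real.exp (-(1 - ε))) * fO ≤ q 1 := by
  obtain ⟨hε0, hε1⟩ := hε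
  -- continuity of q on Icc ε 1
  have hq : ContinuousOn q (Set.Icc ε 1) := by
    intro x hx
    rcases eq_or_lt_of_le hx.1 with h1 | h1
    · subst h1; exact hright.mono Icc_subset_Ici_self
    · rcases eq_or_lt_of_le hx.2 with h2 | h2
      · subst h2; exact hleft.mono Icc_subset_Iic_self
      · exact (hcont.continuousAt (isOpen_Ioo.mem_nhds ⟨h1, h2⟩)).continuousWithinAt
  -- the comparison function g and its derivative
  set g : ℝ → ℝ := fun t => (1 - Real.exp (-(t - ε))) * fO with hg
  have hg' : ∀ x : ℝ, HasDerivAt g (Real.exp (-(x - ε)) * fO) x := by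
    intro x
    have h1 : HasDerivAt (fun t : ℝ => -(t - ε)) (-1) x := by
      exact ((hasDerivAt_id x).sub_const ε).neg
    have h2 : HasDerivAt (fun t : ℝ => Real.exp (-(t - ε)))
        (Real.exp (-(x - ε)) * (-1)) x := h1.exp
    have h3 : HasDerivAt (fun t : ℝ => 1 - Real.exp (-(t - ε)))
        (-(Real.exp (-(x - ε)) * (-1))) x := (h2.const_sub 1)
    rw [hg]
    convert (show HasDerivAt (fun t => (1 - Real.exp (-(t - ε))) * fO) (-(Real.exp (-(x - ε)) * (-1)) * fO) x from h3.mul_const fO) using 1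
    ring
  -- chosen right derivatives of q
  classical
  set qd : ℝ → ℝ := fun x => if h : x ∈ Set.Ico ε 1 then (hderiv x h).choose else 0 with hqd
  have hqd1 : ∀ x ∈ Set.Ico ε 1, HasDerivWithinAt q (qd x) (Set.Ici x) x := by
    intro x hx; simp only [hqd, dif_pos hx]; exact (hderiv x hx).choose_spec.1
  have hqd2 : ∀ x ∈ Set.Ico ε 1, fO - q x < qd x := by
    intro x hx; simp only [hqd, dif_pos hx]; exact (hderiv x hx).choose_spec.2
  -- main fencing inequality: g ≤ q on Icc ε 1
  have key : ∀ ⦃x⦄, x ∈ Set.Icc ε 1 → g x ≤ q x := by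
    refine image_le_of_deriv_right_lt_deriv_boundary'
      (f := g) (f' := fun x => Real.exp (-(x - ε)) * fO)
      (fun x _ => (hg' x).continuousAt.continuousWithinAt)
      (fun x _ => (hg' x).hasDerivWithinAt) ?_ hq hqd1 ?_
    · simp [hg, h0]
    · intro x hx hxe
      have hgx : fO - q x = Real.exp (-(x - ε)) * fO := by
        rw [← hxe]; simp only [hg]; ring
      show Real.exp (-(x - ε)) * fO < qd x
      linarith [hqd2 x hx]
  refine ⟨?_, key ⟨hε1, le_refl 1⟩⟩
  have hset : {t | t ∈ Set.Icc ε 1 ∧ (1 - Real.exp (-(t - ε))) * fO ≤ q t}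
      = Set.Icc ε 1 := by
    ext t
    exact ⟨fun h => h.1, fun h => ⟨h, key h⟩⟩
  rw [hset, csSup_Icc hε1]
end

section
/- Let f : 2^U → ℝ≥0 be a submodular function with multilinear extension F. For every S ⊆ U, every i ∈ S, every j ∈ U \ S, and every t ∈ [0,1], we have F(t·1_{S−i+j}) − F(t·1_S) ≥ t·(∇_j F(t·1_S) − ∇_i F(t·1_S)). -/
/-
Fix every coordinate of `x = t·1_S` except `i` and `j`. Since `F` is affine in each coordinate,
`F` at `(x_i, x_j) = (a, b)` is `A + a (B - A) + b (C - A) + a b δ`, where `A, B, C, D`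
are the multilinear extensions of `f(T)`, `f(T + i)`, `f(T + j)`, `f(T + i + j)` over the
remaining coordinates and `δ = D - B - C + A` is the mixed second derivative, which is `≤ 0`
by submodularity. At `x`, where `x_i = t` and `x_j = 0`, both sides of the inequality equal
`t (C - B)`, except for the extra term `t² δ` on the left.
-/

open Finset

noncomputable def multilinear {U : Type*} [Fintype U] [DecidableEq U]
    (f : Finset U → ℝ) (x : U → ℝ) : ℝ :=
  ∑ S : Finset U, f S * (∏ i ∈ S, x i) * ∏ i ∈ Sᶜ, (1 - x i)

noncomputable def gradF {U : Type*} [Fintype U] [DecidableEq U]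
    (f : Finset U → ℝ) (i : U) (x : U → ℝ) : ℝ :=
  multilinear f (Function.update x i 1) - multilinear f (Function.update x i 0)

section MultilinearOn

variable {U : Type*} [DecidableEq U]

noncomputable def multilinearOn (V : Finset U) (f : Finset U → ℝ) (x : U → ℝ) : ℝ :=
  ∑ T ∈ V.powerset, f T * (∏ u ∈ T, x u) * ∏ u ∈ V \ T, (1 - x u)

lemma multilinear_eq_multilinearOn_univ [Fintype U] (f : Finset U → ℝ) (x : U → ℝ) :
    multilinear f x = multilinearOn univ f x := by
  simp only [multilinear, multilinearOn, powerset_univ, compl_eq_univ_sdiff]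

lemma multilinearOn_congr {V : Finset U} {f : Finset U → ℝ} {x y : U → ℝ}
    (h : ∀ u ∈ V, x u = y u) : multilinearOn V f x = multilinearOn V f y := by
  refine sum_congr rfl fun T hT => ?_
  have hTV := mem_powerset.mp hT
  rw [prod_congr rfl fun u hu => h u (hTV hu),
    prod_congr rfl fun u hu => congrArg (1 - ·) (h u (mem_sdiff.mp hu).1)]

lemma multilinearOn_insert {V : Finset U} {k : U} (hk : k ∉ V) (f : Finset U → ℝ)
    (x : U → ℝ) :
    multilinearOn (insert k V) f x
      = (1 - x k) * multilinearOn V f x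
        + x k * multilinearOn V (fun T => f (insert k T)) x := by
  rw [multilinearOn, sum_powerset_insert hk, multilinearOn, multilinearOn, mul_sum, mul_sum]
  congr 1 <;> refine sum_congr rfl fun T hT => ?_
  · have hkT : k ∉ T := fun h => hk (mem_powerset.mp hT h)
    rw [insert_sdiff_of_notMem _ hkT, prod_insert fun h => hk (mem_sdiff.mp h).1]
    ring
  · have hkT : k ∉ T := fun h => hk (mem_powerset.mp hT h)
    rw [insert_sdiff_insert, sdiff_insert_of_notMem hk, prod_insert hkT]
    ring

lemma multilinearOn_add (V : Finset U) (f g : Finset U → ℝ) (x : U → ℝ) :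
    multilinearOn V (fun T => f T + g T) x = multilinearOn V f x + multilinearOn V g x := by
  simp only [multilinearOn, add_mul, sum_add_distrib]

lemma multilinearOn_mono {V : Finset U} {f g : Finset U → ℝ} {x : U → ℝ}
    (h : ∀ T ⊆ V, f T ≤ g T) (hx : ∀ u ∈ V, x u ∈ Set.Icc (0 : ℝ) 1) :
    multilinearOn V f x ≤ multilinearOn V g x := by
  refine sum_le_sum fun T hT => ?_
  have hTV := mem_powerset.mp hT
  have hweight : 0 ≤ (∏ u ∈ T, x u) * ∏ u ∈ V \ T, (1 - x u) :=
    mul_nonneg (prod_nonneg fun u hu => (hx u (hTV hu)).1)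
      (prod_nonneg fun u hu => sub_nonneg.mpr (hx u (mem_sdiff.mp hu).1).2)
  simpa only [mul_assoc] using mul_le_mul_of_nonneg_right (h T hTV) hweight

lemma multilinearOn_mixed_difference_nonpos {V : Finset U} {f : Finset U → ℝ} {i j : U}
    (hsub : ∀ S T : Finset U, S ⊆ T → ∀ k ∉ T, f (insert k T) - f T ≤ f (insert k S) - f S)
    (hij : i ≠ j) (hjV : j ∉ V) {x : U → ℝ}
    (hx : ∀ u ∈ V, x u ∈ Set.Icc (0 : ℝ) 1) :
    multilinearOn V (fun T => f (insert i (insert j T))) x + multilinearOn V f x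
      ≤ multilinearOn V (fun T => f (insert i T)) x
        + multilinearOn V (fun T => f (insert j T)) x := by
  rw [← multilinearOn_add, ← multilinearOn_add]
  refine multilinearOn_mono (fun T hT => ?_) hx
  have hjiT : j ∉ insert i T := by
    simpa only [mem_insert, not_or] using ⟨hij.symm, fun h => hjV (hT h)⟩
  have := hsub T (insert i T) (subset_insert i T) j hjiT
  rw [insert_comm] at this
  linarith

end MultilinearOn

section Multilinear

variable {U : Type*} [Fintype U] [DecidableEq U]

lemma multilinear_update_update (f : Finset U → ℝ) (x : U → ℝ) {i j : U} (hij : i ≠ j)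
    (a b : ℝ) :
    let W := univ \ {i, j}
    multilinear f (Function.update (Function.update x i a) j b)
      = (1 - a) * (1 - b) * multilinearOn W f x
        + a * (1 - b) * multilinearOn W (fun T => f (insert i T)) x
        + (1 - a) * b * multilinearOn W (fun T => f (insert j T)) x
        + a * b * multilinearOn W (fun T => f (insert i (insert j T))) x := by
  intro W
  have hiW : i ∉ insert j W := by simp [W, hij]
  have hjW : j ∉ W := by simp [W]
  have huniv : (univ : Finset U) = insert i (insert j W) := by
    ext u; simp only [W, mem_univ, mem_insert, mem_sdiff, mem_singleton, true_and]; tauto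
  have hagree : ∀ u ∈ W, Function.update (Function.update x i a) j b u = x u := by
    intro u hu
    obtain ⟨hui, huj⟩ : u ≠ i ∧ u ≠ j := by simpa [W, not_or] using hu
    rw [Function.update_of_ne huj, Function.update_of_ne hui]
  rw [multilinear_eq_multilinearOn_univ, huniv, multilinearOn_insert hiW,
    multilinearOn_insert hjW, multilinearOn_insert hjW, multilinearOn_congr hagree,
    multilinearOn_congr hagree, multilinearOn_congr hagree, multilinearOn_congr hagree,
    Function.update_self, Function.update_of_ne hij, Function.update_self]
  ring

end Multilinear

theorem stmt4_general {U : Type*} [Fintype U] [DecidableEq U]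
    (f : Finset U → ℝ)
    (hsub : ∀ S T : Finset U, S ⊆ T → ∀ i ∉ T,
      f (insert i T) - f T ≤ f (insert i S) - f S)
    (S : Finset U) (i : U) (hi : i ∈ S) (j : U) (hj : j ∉ S)
    (t : ℝ) (ht : t ∈ Set.Icc (0:ℝ) 1) :
    t * (gradF f j (fun u => if u ∈ S then t else 0)
          - gradF f i (fun u => if u ∈ S then t else 0))
      ≤ multilinear f (fun u => if u ∈ insert j (S.erase i) then t else 0)
          - multilinear f (fun u => if u ∈ S then t else 0) := by
  have hij : i ≠ j := fun h => hj (h ▸ hi)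
  set x : U → ℝ := fun u => if u ∈ S then t else 0
  set P : ℝ → ℝ → U → ℝ := fun a b => Function.update (Function.update x i a) j b
  have hy : (fun u => if u ∈ insert j (S.erase i) then t else 0) = P 0 t := by
    funext u; by_cases hui : u = i <;> by_cases huj : u = j <;> simp_all [P, x]
  have hx : x = P t 0 := by
    funext u; by_cases hui : u = i <;> by_cases huj : u = j <;> simp_all [P, x]
  have hxj : ∀ c, Function.update x j c = P t c := by
    intro c; rw [hx, Function.update_idem]
  have hxi : ∀ c, Function.update x i c = P c 0 := by
    intro c; rw [hx, Function.update_comm hij.symm, Function.update_idem]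
  have hx01 : ∀ u, x u ∈ Set.Icc (0 : ℝ) 1 := fun u => by
    simp only [x]; split_ifs
    exacts [ht, ⟨le_rfl, zero_le_one⟩]
  have hmixed := multilinearOn_mixed_difference_nonpos (V := univ \ {i, j}) hsub hij
    (by simp) fun u _ => hx01 u
  simp only [gradF, hxj, hxi, hy]
  rw [hx]
  simp only [P, multilinear_update_update f x hij]
  nlinarith [mul_nonneg ht.1 ht.1]

theorem stmt4 {U : Type*} [Fintype U] [DecidableEq U]
    (f : Finset U → ℝ) (hf0 : ∀ S, 0 ≤ f S)
    (hsub : ∀ S T : Finset U, S ⊆ T → ∀ i ∉ T,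
      f (insert i T) - f T ≤ f (insert i S) - f S)
    (S : Finset U) (i : U) (hi : i ∈ S) (j : U) (hj : j ∉ S)
    (t : ℝ) (ht : t ∈ Set.Icc (0:ℝ) 1) :
    t * (gradF f j (fun u => if u ∈ S then t else 0)
          - gradF f i (fun u => if u ∈ S then t else 0))
      ≤ multilinear f (fun u => if u ∈ insert j (S.erase i) then t else 0)
          - multilinear f (fun u => if u ∈ S then t else 0) :=
  stmt4_general f hsub S i hi j hj t ht
end

section
/- Let E be a finite set of n elements with nonnegative weights w_e ≥ 0, let M ⊆ E be a subset of size m ≥ 1, and let δ > 0. If X ⊆ E is a uniformly random subset of E of size min{⌈(n/m)·ln(1/δ)⌉, n}, then E[max_{e ∈ X} w_e] ≥ (1 − δ)·(∑_{e ∈ M} w_e)/m. -/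
open Finset

-- counting lemma
lemma aux_count {α : Type*} [DecidableEq α] (M : Finset α) (e : α) (he : e ∈ M) (j : ℕ) :
    ((M.powersetCard (j+1)).filter (fun S => e ∈ S)).card = (M.card - 1).choose j := by
  rw [← Finset.card_erase_of_mem he, ← Finset.card_powersetCard j (M.erase e)]
  refine Finset.card_bij' (fun S _ => S.erase e) (fun T _ => insert e T) ?_ ?_ ?_ ?_
  · intro S hS
    simp only [Finset.mem_filter, Finset.mem_powersetCard] at hS
    simp only [Finset.mem_powersetCard]
    exact ⟨Finset.erase_subset_erase e hS.1.1,
      by rw [Finset.card_erase_of_mem hS.2, hS.1.2]; rfl⟩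
  · intro T hT
    simp only [Finset.mem_powersetCard] at hT
    have heT : e ∉ T := fun h => (Finset.mem_erase.1 (hT.1 h)).1 rfl
    simp only [Finset.mem_filter, Finset.mem_powersetCard]
    refine ⟨⟨?_, ?_⟩, Finset.mem_insert_self e T⟩
    · exact Finset.insert_subset he (hT.1.trans (Finset.erase_subset e M))
    · rw [Finset.card_insert_of_notMem heT, hT.2]
  · intro S hS
    simp only [Finset.mem_filter] at hS
    exact Finset.insert_erase hS.2
  · intro T hT
    simp only [Finset.mem_powersetCard] at hT
    exact Finset.erase_insert (fun h => (Finset.mem_erase.1 (hT.1 h)).1 rfl)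

-- L1
lemma aux_sum_powersetCard {α : Type*} [DecidableEq α] (M : Finset α) (w : α → ℝ) (j : ℕ) :
    ∑ S ∈ M.powersetCard (j+1), ∑ e ∈ S, w e
      = ((M.card - 1).choose j : ℝ) * ∑ e ∈ M, w e := by
  have h1 : ∀ S ∈ M.powersetCard (j+1), ∑ e ∈ S, w e = ∑ e ∈ M, if e ∈ S then w e else 0 := by
    intro S hS
    rw [Finset.sum_ite_mem, Finset.inter_comm, (Finset.inter_eq_left).2 (Finset.mem_powersetCard.1 hS).1]
  rw [Finset.sum_congr rfl h1, Finset.sum_comm]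
  rw [Finset.mul_sum]
  apply Finset.sum_congr rfl
  intro e he
  rw [Finset.sum_ite, Finset.sum_const_zero, add_zero, Finset.sum_const, aux_count M e he j]
  simp [mul_comm]

lemma aux_vandermonde (n m k : ℕ) (hm : m ≤ n) :
    n.choose k = ∑ j ∈ Finset.range (k+1), m.choose j * (n-m).choose (k-j) := by
  conv_lhs => rw [← Nat.add_sub_cancel' hm, Nat.add_choose_eq]
  rw [Finset.Nat.sum_antidiagonal_eq_sum_range_succ_mk]

lemma aux_ratio (n k : ℕ) : ∀ m, (n-m).choose k * n^m ≤ n.choose k * (n-k)^m := by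
  intro m
  induction m with
  | zero => simp
  | succ m ih =>
    rcases Nat.eq_zero_or_pos (n - m) with h0 | hpos
    · have h1 : n - (m+1) = 0 := by omega
      rw [h1] at *
      rw [h0] at ih
      rcases Nat.eq_zero_or_pos k with hk | hk
      · subst hk
        simp
      · rw [Nat.choose_eq_zero_of_lt (by omega), Nat.zero_mul]
        exact Nat.zero_le _
    · set n' := n - m with hn'
      have hn'le : n' ≤ n := Nat.sub_le _ _
      have key : (n'-1).choose k * n' = n'.choose k * (n' - k) := by
        have h2 : n' - 1 + 1 = n' := by omega
        have := Nat.choose_mul_succ_eq (n'-1) k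
        rwa [h2] at this
      refine Nat.le_of_mul_le_mul_left ?_ hpos
      have h1 : n - (m+1) = n' - 1 := by omega
      calc n' * ((n-(m+1)).choose k * n^(m+1))
          = ((n'-1).choose k * n') * (n * n^m) := by rw [h1]; ring
        _ = (n'.choose k * (n' - k)) * (n * n^m) := by rw [key]
        _ = n'.choose k * n^m * ((n' - k) * n) := by ring
        _ ≤ n'.choose k * n^m * ((n - k) * n') := by
            apply Nat.mul_le_mul_left
            calc (n' - k) * n = n' * n - k * n := by rw [Nat.sub_mul]
              _ ≤ n * n' - k * n' := by
                  rw [Nat.mul_comm n' n]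
                  exact Nat.sub_le_sub_left (Nat.mul_le_mul_left k hn'le) _
              _ = (n - k) * n' := by rw [Nat.sub_mul]
        _ = ((n - k) * n') * (n'.choose k * n^m) := by ring
        _ ≤ ((n - k) * n') * (n.choose k * (n-k)^m) := Nat.mul_le_mul_left _ ih
        _ = n' * (n.choose k * (n-k)^(m+1)) := by ring

lemma aux_key1 {α : Type*} [DecidableEq α] (E : Finset α) (w : α → ℝ) (hw : ∀ e, 0 ≤ w e)
    (M : Finset α) (hME : M ⊆ E) (hM : M.Nonempty) (k : ℕ) :
    ((E.card.choose k : ℝ) - (((E.card - M.card).choose k : ℕ) : ℝ))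
        * ((∑ e ∈ M, w e) / (M.card : ℝ))
      ≤ ∑ X ∈ E.powersetCard k, Finset.fold max 0 w X := by
  classical
  have hm : 0 < M.card := Finset.card_pos.mpr hM
  have hmn : M.card ≤ E.card := Finset.card_le_card hME
  set n := E.card
  set m := M.card
  set W := ∑ e ∈ M, w e with hW
  have hW0 : 0 ≤ W := Finset.sum_nonneg (fun e _ => hw e)
  have hg0 : ∀ X : Finset α, (0:ℝ) ≤ X.fold max 0 w :=
    fun X => (Finset.le_fold_max _).mpr (Or.inl le_rfl)
  have hgw : ∀ (X : Finset α) (e : α), e ∈ X → w e ≤ X.fold max 0 w :=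
    fun X e he => (Finset.le_fold_max _).mpr (Or.inr ⟨e, he, le_rfl⟩)
  have hsd : (E \ M).card = n - m := Finset.card_sdiff_of_subset hME
  set D : Finset ((_ : ℕ) × Finset α × Finset α) :=
    (Finset.range (k+1)).sigma
      (fun j => (M.powersetCard j) ×ˢ ((E \ M).powersetCard (k-j))) with hD
  have hmemD : ∀ p ∈ D, p.1 ≤ k ∧ p.2.1 ⊆ M ∧ p.2.1.card = p.1 ∧
      p.2.2 ⊆ E \ M ∧ p.2.2.card = k - p.1 := by
    intro p hp
    simp only [hD, Finset.mem_sigma, Finset.mem_product, Finset.mem_powersetCard,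
      Finset.mem_range] at hp
    exact ⟨by omega, hp.2.1.1, hp.2.1.2, hp.2.2.1, hp.2.2.2⟩
  have hinter : ∀ p ∈ D, (p.2.1 ∪ p.2.2) ∩ M = p.2.1 ∧ (p.2.1 ∪ p.2.2) \ M = p.2.2 := by
    intro p hp
    obtain ⟨-, hS, -, hT, -⟩ := hmemD p hp
    have hTd : Disjoint p.2.2 M := (Finset.subset_sdiff.mp hT).2
    constructor
    · rw [Finset.union_inter_distrib_right, Finset.inter_eq_left.mpr hS,
        Finset.disjoint_iff_inter_eq_empty.mp hTd, Finset.union_empty]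
    · rw [Finset.union_sdiff_distrib, Finset.sdiff_eq_empty_iff_subset.mpr hS,
        Finset.empty_union, Finset.sdiff_eq_self_iff_disjoint.mpr hTd]
  have hmapsto : ∀ p ∈ D, p.2.1 ∪ p.2.2 ∈ E.powersetCard k := by
    intro p hp
    obtain ⟨hjk, hS, hSc, hT, hTc⟩ := hmemD p hp
    have hTd : Disjoint p.2.1 p.2.2 :=
      Finset.disjoint_left.mpr (fun a haS haT => ((Finset.mem_sdiff.mp (hT haT)).2 (hS haS)))
    rw [Finset.mem_powersetCard]
    constructor
    · exact Finset.union_subset (hS.trans hME) (hT.trans (Finset.sdiff_subset))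
    · rw [Finset.card_union_of_disjoint hTd, hSc, hTc]; omega
  have hinj : ∀ p ∈ D, ∀ q ∈ D, p.2.1 ∪ p.2.2 = q.2.1 ∪ q.2.2 → p = q := by
    intro p hp q hq huv
    have h1 := hinter p hp
    have h2 := hinter q hq
    have hS : p.2.1 = q.2.1 := by rw [← h1.1, ← h2.1, huv]
    have hT : p.2.2 = q.2.2 := by rw [← h1.2, ← h2.2, huv]
    have hj : p.1 = q.1 := by
      rw [← (hmemD p hp).2.2.1, ← (hmemD q hq).2.2.1, hS]
    obtain ⟨j1, S1, T1⟩ := p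
    obtain ⟨j2, S2, T2⟩ := q
    simp only at hS hT hj
    subst hS hT hj
    rfl
  -- step 1 : the sum over D bounds the total sum from below
  have step1 : ∑ p ∈ D, (∑ e ∈ p.2.1, w e) / (p.2.1.card : ℝ)
      ≤ ∑ X ∈ E.powersetCard k, Finset.fold max 0 w X := by
    have h1 : ∑ p ∈ D, (∑ e ∈ p.2.1, w e) / (p.2.1.card : ℝ)
        ≤ ∑ p ∈ D, Finset.fold max 0 w (p.2.1 ∪ p.2.2) := by
      apply Finset.sum_le_sum
      intro p hp
      rcases Finset.eq_empty_or_nonempty p.2.1 with hS | hS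
      · rw [hS]; simpa using hg0 _
      · rw [div_le_iff₀ (by exact_mod_cast Finset.card_pos.mpr hS)]
        calc ∑ e ∈ p.2.1, w e ≤ ∑ _e ∈ p.2.1, Finset.fold max 0 w (p.2.1 ∪ p.2.2) :=
              Finset.sum_le_sum (fun e he => hgw _ e (Finset.mem_union_left _ he))
          _ = _ := by rw [Finset.sum_const, nsmul_eq_mul, mul_comm]
    have h2 : ∑ p ∈ D, Finset.fold max 0 w (p.2.1 ∪ p.2.2)
        = ∑ X ∈ D.image (fun p => p.2.1 ∪ p.2.2), Finset.fold max 0 w X :=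
      (Finset.sum_image fun p hp q hq h => hinj p hp q hq h).symm
    have h3 : D.image (fun p => p.2.1 ∪ p.2.2) ⊆ E.powersetCard k := by
      intro X hX
      obtain ⟨p, hp, rfl⟩ := Finset.mem_image.mp hX
      exact hmapsto p hp
    exact h1.trans (h2.le.trans (Finset.sum_le_sum_of_subset_of_nonneg h3
      (fun X _ _ => hg0 X)))
  refine le_trans ?_ step1
  -- step 2 : compute the sum over D
  have step2 : ∑ p ∈ D, (∑ e ∈ p.2.1, w e) / (p.2.1.card : ℝ)
      = ∑ j ∈ Finset.range (k+1),
          (((n-m).choose (k-j) : ℕ) : ℝ) * ((∑ S ∈ M.powersetCard j, ∑ e ∈ S, w e) / (j : ℝ)) := by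
    rw [hD, Finset.sum_sigma]
    apply Finset.sum_congr rfl
    intro j hj
    rw [Finset.sum_product]
    rw [Finset.sum_div, Finset.mul_sum]
    apply Finset.sum_congr rfl
    intro S hS
    dsimp only
    rw [Finset.sum_const, Finset.card_powersetCard, hsd,
      (Finset.mem_powersetCard.mp hS).2, nsmul_eq_mul]
  rw [step2]
  -- peel off j = 0 and rewrite the inner sums
  rw [Finset.sum_range_succ']
  have hzero : (((n-m).choose (k-0) : ℕ) : ℝ)
      * ((∑ S ∈ M.powersetCard 0, ∑ e ∈ S, w e) / ((0:ℕ) : ℝ)) = 0 := by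
    simp
  rw [hzero, add_zero]
  have hterm : ∀ i ∈ Finset.range k,
      (((n-m).choose (k-(i+1)) : ℕ) : ℝ)
        * ((∑ S ∈ M.powersetCard (i+1), ∑ e ∈ S, w e) / ((i+1 : ℕ) : ℝ))
      = ((m.choose (i+1) * (n-m).choose (k-(i+1)) : ℕ) : ℝ) * (W / m) := by
    intro i _
    rw [aux_sum_powersetCard M w i]
    have hcN : (m-1).choose i * m = m.choose (i+1) * (i+1) := by
      have h0 := Nat.add_one_mul_choose_eq (m-1) i
      rw [Nat.sub_add_cancel hm] at h0
      rw [Nat.mul_comm]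
      exact h0
    have hdd : ((m - 1).choose i : ℝ) / ((i:ℝ)+1) = (m.choose (i+1) : ℝ) / (m:ℝ) := by
      rw [div_eq_div_iff (by positivity) (by exact_mod_cast hm.ne')]
      exact_mod_cast hcN
    push_cast
    calc ((n-m).choose (k-(i+1)) : ℝ) * (((m - 1).choose i : ℝ) * W / ((i:ℝ)+1))
        = (((n-m).choose (k-(i+1)) : ℝ) * W) * (((m - 1).choose i : ℝ) / ((i:ℝ)+1)) := by
          ring
      _ = (((n-m).choose (k-(i+1)) : ℝ) * W) * ((m.choose (i+1) : ℝ) / (m:ℝ)) := by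
          rw [hdd]
      _ = (m.choose (i+1) : ℝ) * ((n-m).choose (k-(i+1)) : ℝ) * (W / (m:ℝ)) := by
          ring
  rw [Finset.sum_congr rfl hterm, ← Finset.sum_mul]
  have hvanN : n.choose k
      = (∑ i ∈ Finset.range k, m.choose (i+1) * (n-m).choose (k-(i+1)))
        + m.choose 0 * (n-m).choose (k-0) := by
    rw [aux_vandermonde n m k hmn, Finset.sum_range_succ']
  simp only [Nat.choose_zero_right, one_mul, Nat.sub_zero] at hvanN
  have hvanR : (n.choose k : ℝ)
      = (∑ i ∈ Finset.range k, ((m.choose (i+1) * (n-m).choose (k-(i+1)) : ℕ) : ℝ))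
        + ((n-m).choose k : ℝ) := by exact_mod_cast hvanN
  apply mul_le_mul_of_nonneg_right _ (div_nonneg hW0 (Nat.cast_nonneg m))
  linarith [hvanR]

theorem stmt6 {α : Type*} [DecidableEq α]
    (E : Finset α) (w : α → ℝ) (hw : ∀ e, 0 ≤ w e)
    (M : Finset α) (hME : M ⊆ E) (hM : M.Nonempty)
    (δ : ℝ) (hδ : 0 < δ) :
    (1 - δ) * (∑ e ∈ M, w e) / (M.card : ℝ)
      ≤ (∑ X ∈ E.powersetCard
            (min ⌈((E.card : ℝ) / (M.card : ℝ)) * Real.log (1 / δ)⌉₊ E.card),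
          Finset.fold max 0 w X)
        / (E.card.choose
            (min ⌈((E.card : ℝ) / (M.card : ℝ)) * Real.log (1 / δ)⌉₊ E.card) : ℝ) := by
  classical
  have hm : 0 < M.card := Finset.card_pos.mpr hM
  have hmn : M.card ≤ E.card := Finset.card_le_card hME
  set n := E.card with hn
  set m := M.card with hmdef
  have hn0 : 0 < n := lt_of_lt_of_le hm hmn
  set k := min ⌈((n : ℝ) / (m : ℝ)) * Real.log (1 / δ)⌉₊ n with hk
  have hkn : k ≤ n := min_le_right _ _
  have hCpos : 0 < (n.choose k : ℝ) := by exact_mod_cast Nat.choose_pos hkn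
  set W := ∑ e ∈ M, w e with hW
  have hW0 : 0 ≤ W := Finset.sum_nonneg (fun e _ => hw e)
  -- Key 2 : ((n-k)/n)^m ≤ δ
  have hbase0 : (0:ℝ) ≤ 1 - (k:ℝ)/(n:ℝ) := by
    rw [sub_nonneg, div_le_one (by exact_mod_cast hn0)]
    exact_mod_cast hkn
  have hpow : (1 - (k:ℝ)/(n:ℝ))^m ≤ δ := by
    rcases le_or_gt (⌈((n : ℝ) / (m : ℝ)) * Real.log (1 / δ)⌉₊) n with hc | hc
    · have hkc : k = ⌈((n : ℝ) / (m : ℝ)) * Real.log (1 / δ)⌉₊ := min_eq_left hc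
      have hceil : ((n : ℝ) / (m : ℝ)) * Real.log (1 / δ) ≤ (k : ℝ) := by
        rw [hkc]; exact Nat.le_ceil _
      have hlog : Real.log (1 / δ) ≤ (k : ℝ) * m / n := by
        rw [div_mul_eq_mul_div, div_le_iff₀ (by exact_mod_cast hm)] at hceil
        rw [le_div_iff₀ (by exact_mod_cast hn0)]
        calc Real.log (1/δ) * n = (n:ℝ) * Real.log (1/δ) := by ring
          _ ≤ (k:ℝ) * m := hceil
      calc (1 - (k:ℝ)/(n:ℝ))^m ≤ (Real.exp (-((k:ℝ)/(n:ℝ))))^m := by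
            apply pow_le_pow_left₀ hbase0
            have := Real.add_one_le_exp (-((k:ℝ)/(n:ℝ)))
            linarith [this]
        _ = Real.exp ((m:ℝ) * (-((k:ℝ)/(n:ℝ)))) := by
            rw [← Real.exp_nat_mul]
        _ ≤ Real.exp (Real.log δ) := by
            apply Real.exp_le_exp.mpr
            rw [Real.log_div one_ne_zero hδ.ne', Real.log_one, zero_sub] at hlog
            have h9 : (m:ℝ) * (-((k:ℝ)/(n:ℝ))) = -((k:ℝ) * m / n) := by ring
            rw [h9]
            linarith [hlog]
        _ = δ := Real.exp_log hδ
    · have hkc : k = n := min_eq_right (le_of_lt hc)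
      have : 1 - (k:ℝ)/(n:ℝ) = 0 := by
        rw [hkc, div_self (by exact_mod_cast hn0.ne'), sub_self]
      rw [this, zero_pow hm.ne']
      exact hδ.le
  have key2 : (((n - m).choose k : ℕ) : ℝ) ≤ δ * (n.choose k : ℝ) := by
    have hr := aux_ratio n k m
    have hrR : (((n-m).choose k : ℕ) : ℝ) * (n:ℝ)^m ≤ (n.choose k : ℝ) * ((n:ℝ) - k)^m := by
      have := (Nat.cast_le (α := ℝ)).mpr hr
      push_cast [Nat.cast_sub hkn] at this
      exact_mod_cast this
    have hnpow : (0:ℝ) < (n:ℝ)^m := by positivity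
    have h1 : (((n-m).choose k : ℕ) : ℝ) ≤ (n.choose k : ℝ) * ((1 - (k:ℝ)/(n:ℝ))^m) := by
      have hfac : ((n:ℝ) - k)^m = (1 - (k:ℝ)/(n:ℝ))^m * (n:ℝ)^m := by
        rw [← mul_pow]
        congr 1
        field_simp
      rw [hfac, ← mul_assoc] at hrR
      exact le_of_mul_le_mul_right hrR hnpow
    calc (((n-m).choose k : ℕ) : ℝ) ≤ (n.choose k : ℝ) * ((1 - (k:ℝ)/(n:ℝ))^m) := h1
      _ ≤ (n.choose k : ℝ) * δ := by
          apply mul_le_mul_of_nonneg_left hpow hCpos.le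
      _ = δ * (n.choose k : ℝ) := mul_comm _ _
  have key1 := aux_key1 E w hw M hME hM k
  rw [div_le_div_iff₀ (by exact_mod_cast hm) hCpos]
  have hmne : (m:ℝ) ≠ 0 := by exact_mod_cast hm.ne'
  have key1' : ((n.choose k : ℝ) - (((n-m).choose k : ℕ) : ℝ)) * W
      ≤ (∑ X ∈ E.powersetCard k, Finset.fold max 0 w X) * m := by
    have h := mul_le_mul_of_nonneg_right key1 (by exact_mod_cast hm.le : (0:ℝ) ≤ m)
    rwa [mul_assoc, div_mul_cancel₀ _ hmne] at h
  have h0 : 0 ≤ (δ * (n.choose k : ℝ) - (((n-m).choose k : ℕ) : ℝ)) * W :=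
    mul_nonneg (by linarith [key2]) hW0
  nlinarith [key1', h0]
end

section
/- For every k ∈ ℕ (k ≥ 1) and every ε ∈ (0, 1/2), the set CP(k,ε) = { ⌈k·(1 − β^ℓ)⌉ : ℓ ∈ ℕ≥0 } with β = 1 − ε/4 satisfies: (1) ∑_{i ∈ CP(k,ε)} (k − i) ≤ (4/ε)·k; and (2) for every i ∈ {0,1,…,k}, letting s(i) = min{ i' ∈ CP(k,ε) : i' ≥ i }, we have ∑_{i'=i+1}^{s(i)} 1/(k − (i'−1)) ≤ ε. -/
open Classical in
/-- The set of check points `⌈k·(1 − (1 − ε/4)^ℓ)⌉` for `ℓ ∈ ℕ`. -/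
noncomputable def CP (k : ℕ) (ε : ℝ) : Finset ℕ :=
  (Finset.range (k + 1)).filter
    (fun i => ∃ ℓ : ℕ, i = ⌈(k : ℝ) * (1 - (1 - ε / 4) ^ ℓ)⌉₊)

private lemma stmt7_ceil_le (k : ℕ) (ε : ℝ) (hε0 : 0 < ε) (hε2 : ε < 1/2) :
    ∀ ℓ : ℕ, ⌈(k : ℝ) * (1 - (1 - ε / 4) ^ ℓ)⌉₊ ≤ k := by
  intro ℓ
  rw [Nat.ceil_le]
  have h1 : (0:ℝ) ≤ (1 - ε / 4) ^ ℓ := pow_nonneg (by linarith) ℓ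
  nlinarith [Nat.cast_nonneg (α := ℝ) k]

private lemma stmt7_memCP (k : ℕ) (ε : ℝ) (hε0 : 0 < ε) (hε2 : ε < 1/2) :
    ∀ ℓ : ℕ, ⌈(k : ℝ) * (1 - (1 - ε / 4) ^ ℓ)⌉₊ ∈ CP k ε := by
  intro ℓ
  simp only [CP, Finset.mem_filter, Finset.mem_range]
  exact ⟨Nat.lt_succ_of_le (stmt7_ceil_le k ε hε0 hε2 ℓ), ℓ, rfl⟩

private lemma stmt7_kCP (k : ℕ) (hk : 1 ≤ k) (ε : ℝ) (hε0 : 0 < ε) (hε2 : ε < 1/2) :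
    k ∈ CP k ε := by
  have hβ0 : (0:ℝ) < 1 - ε / 4 := by linarith
  have hβ1 : 1 - ε / 4 < 1 := by linarith
  have hk0 : (0:ℝ) < k := by exact_mod_cast hk
  obtain ⟨n, hn⟩ := exists_pow_lt_of_lt_one (show (0:ℝ) < 1/k by positivity) hβ1
  have hck : ⌈(k : ℝ) * (1 - (1 - ε / 4) ^ n)⌉₊ = k := by
    have hlt : (k:ℝ) - 1 < (k : ℝ) * (1 - (1 - ε / 4) ^ n) := by
      have : (k:ℝ) * (1 - ε/4)^n < 1 := by
        rw [lt_div_iff₀ hk0] at hn; nlinarith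
      nlinarith
    have h1 := stmt7_ceil_le k ε hε0 hε2 n
    have h2 : k - 1 < ⌈(k : ℝ) * (1 - (1 - ε / 4) ^ n)⌉₊ := by
      rw [Nat.lt_ceil, Nat.cast_sub hk, Nat.cast_one]
      exact hlt
    omega
  have := stmt7_memCP k ε hε0 hε2 n
  rwa [hck] at this

private lemma stmt7_part1 (k : ℕ) (hk : 1 ≤ k) (ε : ℝ) (hε0 : 0 < ε) (hε2 : ε < 1/2) :
    (∑ i ∈ CP k ε, ((k : ℝ) - (i : ℝ))) ≤ (4 / ε) * (k : ℝ) := by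
  classical
  have hβ0 : (0:ℝ) < 1 - ε / 4 := by linarith
  have hβ1 : 1 - ε / 4 < 1 := by linarith
  set g : ℕ → ℕ := fun i =>
    if h : ∃ ℓ : ℕ, i = ⌈(k : ℝ) * (1 - (1 - ε / 4) ^ ℓ)⌉₊ then h.choose else 0 with hg
  have hgspec : ∀ i ∈ CP k ε, i = ⌈(k : ℝ) * (1 - (1 - ε / 4) ^ (g i))⌉₊ := by
    intro i hi
    simp only [CP, Finset.mem_filter, Finset.mem_range] at hi
    obtain ⟨-, h⟩ := hi
    simp only [hg, dif_pos h]
    exact h.choose_spec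
  have hginj : ∀ x ∈ CP k ε, ∀ y ∈ CP k ε, g x = g y → x = y := by
    intro x hx y hy hxy
    rw [hgspec x hx, hgspec y hy, hxy]
  calc ∑ i ∈ CP k ε, ((k : ℝ) - (i : ℝ))
      ≤ ∑ i ∈ CP k ε, (k : ℝ) * (1 - ε/4) ^ (g i) := by
        apply Finset.sum_le_sum
        intro i hi
        have h1 : (k : ℝ) * (1 - (1 - ε / 4) ^ (g i)) ≤ (i : ℝ) := by
          have h2 := Nat.le_ceil ((k : ℝ) * (1 - (1 - ε / 4) ^ (g i)))
          rw [← hgspec i hi] at h2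
          exact h2
        nlinarith
    _ = ∑ ℓ ∈ (CP k ε).image g, (k : ℝ) * (1 - ε/4) ^ ℓ := by
        rw [Finset.sum_image hginj]
    _ ≤ ∑' ℓ : ℕ, (k : ℝ) * (1 - ε/4) ^ ℓ := by
        apply Summable.sum_le_tsum
        · intro ℓ _; positivity
        · exact (summable_geometric_of_lt_one hβ0.le hβ1).mul_left _
    _ = (k : ℝ) * (1 - (1 - ε/4))⁻¹ := by
        rw [tsum_mul_left, tsum_geometric_of_lt_one hβ0.le hβ1]
    _ = 4 / ε * k := by
        have : (1:ℝ) - (1 - ε/4) = ε/4 := by ring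
        rw [this]
        field_simp

private lemma stmt7_part2_case (k : ℕ) (hk : 1 ≤ k) (ε : ℝ) (hε0 : 0 < ε)
    (hε2 : ε < 1/2) (i s m : ℕ) (his : i ≤ s) (hsk : s ≤ k)
    (hnot : ⌈(k : ℝ) * (1 - (1 - ε / 4) ^ m)⌉₊ < i)
    (hsle : s ≤ ⌈(k : ℝ) * (1 - (1 - ε / 4) ^ (m + 1))⌉₊) :
    ∑ i' ∈ Finset.Icc (i + 1) s, (1 : ℝ) / ((k : ℝ) - ((i' : ℝ) - 1)) ≤ ε := by
  have hβ0 : (0:ℝ) < 1 - ε / 4 := by linarith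
  have hβ1 : 1 - ε / 4 < 1 := by linarith
  have hk0 : (0:ℝ) < k := by exact_mod_cast hk
  have hi1 : 1 ≤ i := by omega
  have h1 : (k : ℝ) * (1 - (1 - ε / 4) ^ m) ≤ (i : ℝ) - 1 := by
    have hle : ⌈(k : ℝ) * (1 - (1 - ε / 4) ^ m)⌉₊ ≤ i - 1 := by omega
    have := Nat.ceil_le.1 hle
    have hcast : ((i - 1 : ℕ) : ℝ) = (i : ℝ) - 1 := by
      push_cast [Nat.cast_sub hi1]; ring
    linarith [hcast ▸ this]
  have h2 : (s : ℝ) < (k : ℝ) * (1 - (1 - ε / 4) ^ (m+1)) + 1 := by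
    have hnn : (0:ℝ) ≤ (k : ℝ) * (1 - (1 - ε / 4) ^ (m+1)) := by
      have := pow_le_one₀ hβ0.le hβ1.le (n := m+1)
      nlinarith
    have hc := Nat.ceil_lt_add_one hnn
    have : (s : ℝ) ≤ (⌈(k : ℝ) * (1 - (1 - ε / 4) ^ (m+1))⌉₊ : ℝ) := by
      exact_mod_cast hsle
    linarith
  have hpm : (0:ℝ) < (1 - ε/4) ^ m := pow_pos hβ0 m
  have h3 : (s : ℝ) - i ≤ (k : ℝ) * (1 - ε/4) ^ m * (ε/4) := by
    have hexp : (1 - ε/4 : ℝ) ^ (m+1) = (1 - ε/4) ^ m * (1 - ε/4) := pow_succ _ m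
    nlinarith
  have h4 : (k : ℝ) * (1 - ε/4) ^ (m+1) ≤ (k : ℝ) - s + 1 := by
    nlinarith
  have h5 : (0:ℝ) < (k : ℝ) * (1 - ε/4) ^ (m+1) := by positivity
  have hterm : ∀ i' ∈ Finset.Icc (i + 1) s,
      (1 : ℝ) / ((k : ℝ) - ((i' : ℝ) - 1)) ≤ 1 / ((k : ℝ) * (1 - ε/4) ^ (m+1)) := by
    intro i' hi'
    rw [Finset.mem_Icc] at hi'
    have hi's : (i' : ℝ) ≤ s := by exact_mod_cast hi'.2
    apply one_div_le_one_div_of_le h5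
    linarith
  calc ∑ i' ∈ Finset.Icc (i + 1) s, (1 : ℝ) / ((k : ℝ) - ((i' : ℝ) - 1))
      ≤ (Finset.Icc (i + 1) s).card • (1 / ((k : ℝ) * (1 - ε/4) ^ (m+1))) :=
        Finset.sum_le_card_nsmul _ _ _ hterm
    _ = ((s - i : ℕ) : ℝ) * (1 / ((k : ℝ) * (1 - ε/4) ^ (m+1))) := by
        rw [Nat.card_Icc, nsmul_eq_mul]
        congr 2
        omega
    _ = ((s : ℝ) - i) / ((k : ℝ) * (1 - ε/4) ^ (m+1)) := by
        rw [Nat.cast_sub his]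
        ring
    _ ≤ ((k : ℝ) * (1 - ε/4) ^ m * (ε/4)) / ((k : ℝ) * (1 - ε/4) ^ (m+1)) := by
        gcongr
    _ = ε / (4 * (1 - ε/4)) := by
        rw [pow_succ, div_eq_div_iff (by positivity) (by positivity)]
        ring
    _ ≤ ε := by
        apply div_le_self hε0.le
        linarith

theorem stmt7 (k : ℕ) (hk : 1 ≤ k) (ε : ℝ) (hε : ε ∈ Set.Ioo (0:ℝ) (1/2)) :
    (∑ i ∈ CP k ε, ((k : ℝ) - (i : ℝ))) ≤ (4 / ε) * (k : ℝ)
    ∧ ∀ i : ℕ, i ≤ k →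
        ∑ i' ∈ Finset.Icc (i + 1)
            ((((CP k ε).filter (fun j => i ≤ j)).min).untopD k),
          (1 : ℝ) / ((k : ℝ) - ((i' : ℝ) - 1)) ≤ ε := by
  classical
  obtain ⟨hε0, hε2⟩ := hε
  refine ⟨stmt7_part1 k hk ε hε0 hε2, ?_⟩
  intro i hi
  set T := (CP k ε).filter (fun j => i ≤ j) with hT
  have hkT : k ∈ T := Finset.mem_filter.2 ⟨stmt7_kCP k hk ε hε0 hε2, hi⟩
  have hne : T.Nonempty := ⟨k, hkT⟩
  set s := T.min' hne with hs
  have huntop : T.min.untopD k = s := by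
    rw [← Finset.coe_min' hne]
    rfl
  rw [huntop]
  have hsT : s ∈ T := T.min'_mem hne
  have hsmin : ∀ j ∈ T, s ≤ j := fun j hj => Finset.min'_le _ _ hj
  obtain ⟨hsCP, his⟩ := Finset.mem_filter.1 hsT
  have hsk : s ≤ k := by
    have := (Finset.mem_filter.1 hsCP).1
    rw [Finset.mem_range] at this
    omega
  have hexP : ∃ ℓ : ℕ, i ≤ ⌈(k : ℝ) * (1 - (1 - ε / 4) ^ ℓ)⌉₊ := by
    obtain ⟨-, ℓ₀, hℓ₀⟩ := Finset.mem_filter.1 hsCP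
    exact ⟨ℓ₀, hℓ₀ ▸ his⟩
  have hLspec := Nat.find_spec hexP
  have hsle : s ≤ ⌈(k : ℝ) * (1 - (1 - ε / 4) ^ (Nat.find hexP))⌉₊ :=
    hsmin _ (Finset.mem_filter.2 ⟨stmt7_memCP k ε hε0 hε2 _, hLspec⟩)
  clear_value s T
  clear hsmin hsT hkT hT hs huntop
  have hmin : ∀ m, m < Nat.find hexP → ¬ i ≤ ⌈(k : ℝ) * (1 - (1 - ε / 4) ^ m)⌉₊ :=
    fun m hm => Nat.find_min hexP hm
  obtain ⟨L, hLeq⟩ : ∃ L, Nat.find hexP = L := ⟨_, rfl⟩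
  rw [hLeq] at hLspec hsle hmin
  match L, hLspec, hsle, hmin with
  | 0, hLspec, hsle, hmin =>
    have h0 : ⌈(k : ℝ) * (1 - (1 - ε / 4) ^ 0)⌉₊ = 0 := by
      simp
    rw [h0] at hsle
    have : s = 0 := Nat.le_zero.1 hsle
    rw [this]
    simp [Finset.Icc_eq_empty_of_lt]
    linarith
  | m + 1, hLspec, hsle, hmin =>
    have hnot : ⌈(k : ℝ) * (1 - (1 - ε / 4) ^ m)⌉₊ < i := by
      have := hmin m (by omega)
      omega
    exact stmt7_part2_case k hk ε hε0 hε2 i s m his hsk hnot hsle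
end

section
/- Let f : 2^U → ℝ≥0 be monotone submodular with multilinear extension F. For all x, y ∈ [0,1]^U with x ≤ y coordinate-wise and every i ∈ U: F(x ∨ 1_{{i}}) − F(x) ≥ F(y ∨ 1_{{i}}) − F(y). Consequently, for every x ∈ [0,1]^U and every S ⊆ U: ∑_{i ∈ S} (F(x ∨ 1_{{i}}) − F(x)) ≥ F(x ∨ 1_S) − F(x). -/
open Finset

set_option linter.unusedSectionVars false
set_option linter.unusedVariables false

noncomputable def mext {U : Type*} [DecidableEq U] (g : Finset U → ℝ) (A : Finset U) (x : U → ℝ) : ℝ :=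
  ∑ S ∈ A.powerset, g S * (∏ j ∈ S, x j) * ∏ j ∈ A \ S, (1 - x j)

section Aux
variable {U : Type*} [Fintype U] [DecidableEq U]


lemma mext_restrict (g : Finset U → ℝ) {A : Finset U} {i : U} (hi : i ∈ A) (x : U → ℝ) :
    mext g A x = (1 - x i) * mext g (A.erase i) x
      + x i * mext (fun S => g (insert i S)) (A.erase i) x := by
  unfold mext
  have hins : A = insert i (A.erase i) := (Finset.insert_erase hi).symm
  have hni : i ∉ A.erase i := Finset.notMem_erase i A
  rw [hins, Finset.sum_powerset_insert hni, Finset.mul_sum, Finset.mul_sum]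
  simp only [Finset.erase_insert hni]
  congr 1
  · apply Finset.sum_congr rfl
    intro T hT
    rw [Finset.mem_powerset] at hT
    have hiT : i ∉ T := fun h => hni (hT h)
    have h1 : insert i (A.erase i) \ T = insert i (A.erase i \ T) := by
      rw [Finset.insert_sdiff_of_notMem _ hiT]
    have h2 : i ∉ A.erase i \ T := fun h => hni (Finset.mem_sdiff.mp h).1
    rw [h1, Finset.prod_insert h2]
    ring
  · apply Finset.sum_congr rfl
    intro T hT
    rw [Finset.mem_powerset] at hT
    have hiT : i ∉ T := fun h => hni (hT h)
    have h1 : insert i (A.erase i) \ insert i T = A.erase i \ T := by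
      ext a
      simp only [Finset.mem_sdiff, Finset.mem_insert]
      constructor
      · rintro ⟨ha | ha, hb⟩
        · exact absurd (Or.inl ha) hb
        · exact ⟨ha, fun h => hb (Or.inr h)⟩
      · rintro ⟨ha, hb⟩
        exact ⟨Or.inr ha, by rintro (rfl | h); exact hni ha; exact hb h⟩
    rw [h1, Finset.prod_insert hiT]
    ring

lemma mext_congr (g : Finset U → ℝ) {A : Finset U} {x y : U → ℝ}
    (h : ∀ j ∈ A, x j = y j) : mext g A x = mext g A y := by
  unfold mext
  apply Finset.sum_congr rfl
  intro T hT
  rw [Finset.mem_powerset] at hT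
  have p1 : ∏ j ∈ T, x j = ∏ j ∈ T, y j :=
    Finset.prod_congr rfl (fun j hj => h j (hT hj))
  have p2 : ∏ j ∈ A \ T, (1 - x j) = ∏ j ∈ A \ T, (1 - y j) :=
    Finset.prod_congr rfl (fun j hj => by rw [h j (Finset.mem_sdiff.mp hj).1])
  rw [p1, p2]

lemma mext_mono_g {g1 g2 : Finset U → ℝ} {A : Finset U} {x : U → ℝ}
    (hg : ∀ S ⊆ A, g1 S ≤ g2 S) (h0 : ∀ j, 0 ≤ x j) (h1 : ∀ j, x j ≤ 1) :
    mext g1 A x ≤ mext g2 A x := by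
  unfold mext
  apply Finset.sum_le_sum
  intro T hT
  rw [Finset.mem_powerset] at hT
  have hp : (0:ℝ) ≤ (∏ j ∈ T, x j) * ∏ j ∈ A \ T, (1 - x j) := by
    apply mul_nonneg
    · exact Finset.prod_nonneg fun j _ => h0 j
    · exact Finset.prod_nonneg fun j _ => by linarith [h1 j]
  calc g1 T * (∏ j ∈ T, x j) * ∏ j ∈ A \ T, (1 - x j)
      = g1 T * ((∏ j ∈ T, x j) * ∏ j ∈ A \ T, (1 - x j)) := by ring
    _ ≤ g2 T * ((∏ j ∈ T, x j) * ∏ j ∈ A \ T, (1 - x j)) :=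
        mul_le_mul_of_nonneg_right (hg T hT) hp
    _ = g2 T * (∏ j ∈ T, x j) * ∏ j ∈ A \ T, (1 - x j) := by ring

lemma mext_nonneg {g : Finset U → ℝ} {A : Finset U} {x : U → ℝ}
    (hg : ∀ S ⊆ A, 0 ≤ g S) (h0 : ∀ j, 0 ≤ x j) (h1 : ∀ j, x j ≤ 1) :
    0 ≤ mext g A x := by
  have : mext (fun _ => (0:ℝ)) A x = 0 := by simp [mext]
  calc (0:ℝ) = mext (fun _ => (0:ℝ)) A x := this.symm
    _ ≤ mext g A x := mext_mono_g (fun S hS => hg S hS) h0 h1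

lemma mext_sub (g1 g2 : Finset U → ℝ) (A : Finset U) (x : U → ℝ) :
    mext (fun S => g1 S - g2 S) A x = mext g1 A x - mext g2 A x := by
  simp [mext, sub_mul, Finset.sum_sub_distrib]

lemma mext_antitone {A : Finset U} (g : Finset U → ℝ)
    (hg : ∀ S T : Finset U, S ⊆ T → T ⊆ A → g T ≤ g S)
    {x y : U → ℝ} (h0 : ∀ j, 0 ≤ x j) (hxy : ∀ j, x j ≤ y j) (h1 : ∀ j, y j ≤ 1) :
    mext g A y ≤ mext g A x := by
  induction A using Finset.induction generalizing g with
  | empty => simp [mext]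
  | insert _ _ hni =>
    rename_i i A ih
    have hx1 : ∀ j, x j ≤ 1 := fun j => le_trans (hxy j) (h1 j)
    have hy0 : ∀ j, 0 ≤ y j := fun j => le_trans (h0 j) (hxy j)
    have hiA : i ∈ insert i A := Finset.mem_insert_self i A
    rw [mext_restrict g hiA x, mext_restrict g hiA y, Finset.erase_insert hni]
    set g' : Finset U → ℝ := fun S => g (insert i S) with hg'
    have hga : ∀ S T : Finset U, S ⊆ T → T ⊆ A → g T ≤ g S := fun S T hST hTA =>
      hg S T hST (hTA.trans (Finset.subset_insert i A))
    have hg'a : ∀ S T : Finset U, S ⊆ T → T ⊆ A → g' T ≤ g' S := fun S T hST hTA =>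
      hg (insert i S) (insert i T) (Finset.insert_subset_insert i hST)
        (Finset.insert_subset_insert i hTA)
    have ha : mext g A y ≤ mext g A x := ih g hga
    have hb : mext g' A y ≤ mext g' A x := ih g' hg'a
    have hba : mext g' A x ≤ mext g A x := by
      apply mext_mono_g _ h0 hx1
      intro S hS
      exact hg S (insert i S) (Finset.subset_insert i S)
        (Finset.insert_subset_insert i hS)
    have hb'a' : mext g' A y ≤ mext g A y := by
      apply mext_mono_g _ hy0 h1
      intro S hS
      exact hg S (insert i S) (Finset.subset_insert i S)
        (Finset.insert_subset_insert i hS)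
    have h0i := h0 i
    have h1i := h1 i
    have hxyi := hxy i
    nlinarith [hb, ha, hba, hb'a']

lemma multilinear_eq_mext (f : Finset U → ℝ) (x : U → ℝ) :
    multilinear f x = mext f Finset.univ x := by
  simp [multilinear, mext, Finset.powerset_univ, Finset.compl_eq_univ_sdiff]

lemma key (f : Finset U → ℝ) (x : U → ℝ) (i : U) :
    multilinear f (Function.update x i 1) - multilinear f x
      = (1 - x i) * mext (fun S => f (insert i S) - f S) ((Finset.univ : Finset U).erase i) x := by
  have hiu : i ∈ (Finset.univ : Finset U) := Finset.mem_univ i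
  rw [multilinear_eq_mext, multilinear_eq_mext, mext_restrict f hiu x,
    mext_restrict f hiu (Function.update x i 1), mext_sub]
  have hc : ∀ g : Finset U → ℝ,
      mext g ((Finset.univ : Finset U).erase i) (Function.update x i 1)
        = mext g ((Finset.univ : Finset U).erase i) x := by
    intro g
    apply mext_congr
    intro j hj
    exact Function.update_of_ne (Finset.ne_of_mem_erase hj) 1 x
  rw [hc, hc, Function.update_self]
  ring

end Aux

theorem stmt12 {U : Type*} [Fintype U] [DecidableEq U]
    (f : Finset U → ℝ) (hf0 : ∀ S, 0 ≤ f S)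
    (hmono : ∀ S T : Finset U, S ⊆ T → f S ≤ f T)
    (hsub : ∀ S T : Finset U, S ⊆ T → ∀ i ∉ T,
      f (insert i T) - f T ≤ f (insert i S) - f S) :
    (∀ x y : U → ℝ, (∀ u, 0 ≤ x u) → (∀ u, x u ≤ y u) → (∀ u, y u ≤ 1) →
      ∀ i : U,
        multilinear f (fun u => max (y u) (if u = i then 1 else 0)) - multilinear f y
          ≤ multilinear f (fun u => max (x u) (if u = i then 1 else 0)) - multilinear f x)
    ∧ (∀ x : U → ℝ, (∀ u, x u ∈ Set.Icc (0:ℝ) 1) → ∀ S : Finset U,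
        multilinear f (fun u => max (x u) (if u ∈ S then 1 else 0)) - multilinear f x
          ≤ ∑ i ∈ S,
              (multilinear f (fun u => max (x u) (if u = i then 1 else 0))
                - multilinear f x)) := by
  have hmax : ∀ (x : U → ℝ) (i : U), (∀ u, 0 ≤ x u) → (∀ u, x u ≤ 1) →
      (fun u => max (x u) (if u = i then 1 else 0)) = Function.update x i 1 := by
    intro x i h0 h1
    funext u
    by_cases h : u = i
    · subst h; simp [max_eq_right (h1 u)]
    · simp [h, Function.update_of_ne h, max_eq_left (h0 u)]
  have h1 : ∀ x y : U → ℝ, (∀ u, 0 ≤ x u) → (∀ u, x u ≤ y u) → (∀ u, y u ≤ 1) →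
      ∀ i : U,
        multilinear f (fun u => max (y u) (if u = i then 1 else 0)) - multilinear f y
          ≤ multilinear f (fun u => max (x u) (if u = i then 1 else 0)) - multilinear f x := by
    intro x y hx0 hxy hy1 i
    have hx1 : ∀ u, x u ≤ 1 := fun u => le_trans (hxy u) (hy1 u)
    have hy0 : ∀ u, 0 ≤ y u := fun u => le_trans (hx0 u) (hxy u)
    rw [hmax x i hx0 hx1, hmax y i hy0 hy1, key, key]
    set E := (Finset.univ : Finset U).erase i with hE
    set g : Finset U → ℝ := fun S => f (insert i S) - f S with hg
    have hganti : ∀ S T : Finset U, S ⊆ T → T ⊆ E → g T ≤ g S := by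
      intro S T hST hTE
      exact hsub S T hST i (fun h => Finset.notMem_erase i _ (hTE h))
    have hMy : 0 ≤ mext g E y := by
      apply mext_nonneg _ hy0 hy1
      intro S _
      have := hmono S (insert i S) (Finset.subset_insert i S)
      simp only [hg]; linarith
    have hM : mext g E y ≤ mext g E x := mext_antitone g hganti hx0 hxy hy1
    have := hxy i
    have := hy1 i
    nlinarith
  refine ⟨h1, ?_⟩
  intro x hx S
  induction S using Finset.induction with
  | empty =>
    have h : (fun u => max (x u) (if u ∈ (∅ : Finset U) then 1 else 0)) = x := by
      funext u; simp [max_eq_left (hx u).1]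
    rw [h]
    simp
  | insert _ _ hni =>
    rename_i i S ih
    set z : U → ℝ := fun u => max (x u) (if u ∈ S then 1 else 0) with hz
    have hz0 : ∀ u, 0 ≤ z u := fun u => le_trans (hx u).1 (le_max_left _ _)
    have hxz : ∀ u, x u ≤ z u := fun u => le_max_left _ _
    have hz1 : ∀ u, z u ≤ 1 := by
      intro u
      apply max_le (hx u).2
      split <;> norm_num
    have heq : (fun u => max (x u) (if u ∈ insert i S then 1 else 0))
        = (fun u => max (z u) (if u = i then 1 else 0)) := by
      funext u
      by_cases h : u = i
      · subst h
        simp [Finset.mem_insert_self u S, max_eq_right (hx u).2, max_eq_right (hz1 u)]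
      · have hmem : (if u ∈ insert i S then (1:ℝ) else 0) = (if u ∈ S then 1 else 0) := by
          simp [Finset.mem_insert, h]
        simp only [hz, if_neg h, hmem]
        rw [max_eq_left (le_sup_of_le_left (hx u).1)]
    have hstep := h1 x z (fun u => (hx u).1) hxz hz1 i
    rw [heq, Finset.sum_insert hni]
    have := ih
    linarith
end

section
/- Let X be a random variable taking values in {0,1,…,r} and let V_0 ≥ V_1 ≥ … ≥ V_r = 0 be a non-increasing sequence of random variables adapted to a filtration (F_i), with V_i being F_i-measurable. Suppose a sequence of random variables P_0,…,P_r and a monotone submodular f satisfy E[f(P_i) − f(P_{i−1}) | F_{i−1}] ≥ (1−δ)·V_{i−1}/(r−(i−1)) and E[f(O_{i−1}) − f(O_i) | F_{i−1}] ≤ f(O)/(r−(i−1)) for all i ∈ [r], where O_0 = O. Let T ≥ (e−1)/(1−δ)·f(O) and let I = min{ i : V_i ≤ T }. Then E[(e−1)·f(O_I) + f(P_I)] ≥ (e−1)·f(O) + f(∅), and hence E[(1 − 1/e)·f(O_I) + (1/e)·f(P_I)] ≥ (1 − 1/e)·f(O). -/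
open MeasureTheory

theorem stmt15 {Ω : Type*} [m0 : MeasurableSpace Ω]
    (μ : Measure Ω) [IsProbabilityMeasure μ]
    (r : ℕ) (hr : 1 ≤ r)
    (ℱ : ℕ → MeasurableSpace Ω) (hℱle : ∀ i, ℱ i ≤ m0) (hℱmono : Monotone ℱ)
    (fP fOs V : ℕ → Ω → ℝ)
    (δ fOpt fEmpty T : ℝ)
    (hδ : δ ∈ Set.Ico (0:ℝ) 1) (hfOpt : 0 ≤ fOpt) (hfEmpty : 0 ≤ fEmpty)
    (hmeasV : ∀ i, StronglyMeasurable[ℱ i] (V i))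
    (hmeasP : ∀ i, StronglyMeasurable[ℱ i] (fP i))
    (hmeasO : ∀ i, StronglyMeasurable[ℱ i] (fOs i))
    (hintP : ∀ i, Integrable (fP i) μ)
    (hintO : ∀ i, Integrable (fOs i) μ)
    (hVanti : ∀ ω, ∀ i j : ℕ, i ≤ j → V j ω ≤ V i ω)
    (hVr : ∀ ω, V r ω = 0)
    (hO0 : fOs 0 = fun _ => fOpt)
    (hP0 : fP 0 = fun _ => fEmpty)
    (hgain : ∀ i : ℕ, 1 ≤ i → i ≤ r →
      ∀ᵐ ω ∂μ, (1 - δ) * V (i - 1) ω / ((r : ℝ) - ((i : ℝ) - 1))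
        ≤ (μ[(fun ω => fP i ω - fP (i - 1) ω) | ℱ (i - 1)]) ω)
    (hloss : ∀ i : ℕ, 1 ≤ i → i ≤ r →
      ∀ᵐ ω ∂μ, (μ[(fun ω => fOs (i - 1) ω - fOs i ω) | ℱ (i - 1)]) ω
        ≤ fOpt / ((r : ℝ) - ((i : ℝ) - 1)))
    (hT : (Real.exp 1 - 1) / (1 - δ) * fOpt ≤ T) :
    ((Real.exp 1 - 1) * fOpt + fEmpty
        ≤ ∫ ω, ((Real.exp 1 - 1) * fOs (sInf {i : ℕ | V i ω ≤ T}) ω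
            + fP (sInf {i : ℕ | V i ω ≤ T}) ω) ∂μ)
    ∧ ((1 - 1 / Real.exp 1) * fOpt
        ≤ ∫ ω, ((1 - 1 / Real.exp 1) * fOs (sInf {i : ℕ | V i ω ≤ T}) ω
            + (1 / Real.exp 1) * fP (sInf {i : ℕ | V i ω ≤ T}) ω) ∂μ) := by
  obtain ⟨hδ0, hδ1⟩ := hδ
  have hδpos : (0:ℝ) < 1 - δ := by linarith
  have hepos : (0:ℝ) < Real.exp 1 := Real.exp_pos 1
  have he1 : (0:ℝ) < Real.exp 1 - 1 := by
    have := Real.add_one_le_exp (1:ℝ); linarith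
  have hT0 : 0 ≤ T :=
    le_trans (mul_nonneg (div_nonneg he1.le hδpos.le) hfOpt) hT
  have hTfOpt : (Real.exp 1 - 1) * fOpt ≤ (1 - δ) * T := by
    have h1 : (Real.exp 1 - 1) / (1 - δ) * fOpt * (1 - δ) ≤ T * (1 - δ) :=
      mul_le_mul_of_nonneg_right hT hδpos.le
    have h2 : (Real.exp 1 - 1) / (1 - δ) * fOpt * (1 - δ) = (Real.exp 1 - 1) * fOpt := by
      field_simp
    linarith [h1, h2.symm.le, h2.le]
  set g : ℕ → Ω → ℝ := fun i ω => (Real.exp 1 - 1) * fOs i ω + fP i ω with hg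
  set I : Ω → ℕ := fun ω => sInf {i : ℕ | V i ω ≤ T} with hIdef
  have hne : ∀ ω, {i : ℕ | V i ω ≤ T}.Nonempty := fun ω => ⟨r, by simp [hVr ω, hT0]⟩
  have hIr : ∀ ω, I ω ≤ r := fun ω => Nat.sInf_le (by simp [hVr ω, hT0])
  have hIle : ∀ ω (i : ℕ), I ω ≤ i ↔ V i ω ≤ T := by
    intro ω i
    constructor
    · intro h
      exact le_trans (hVanti ω _ _ h) (Nat.sInf_mem (hne ω))
    · intro h; exact Nat.sInf_le h
  have hmem_iff : ∀ (i : ℕ) ω, ω ∈ {ω' | T < V i ω'} ↔ i < I ω := by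
    intro i ω
    simp only [Set.mem_setOf_eq, ← not_le]
    rw [← hIle ω i]
  have hgint : ∀ i, Integrable (g i) μ := fun i =>
    ((hintO i).const_mul _).add (hintP i)
  have hdint : ∀ i : ℕ, Integrable (fun ω => g (i+1) ω - g i ω) μ := fun i =>
    (hgint (i+1)).sub (hgint i)
  have hAmeas : ∀ i : ℕ, MeasurableSet[ℱ i] {ω' | T < V i ω'} := fun i =>
    measurableSet_lt measurable_const (hmeasV i).measurable
  have hAmeas0 : ∀ i : ℕ, MeasurableSet {ω' | T < V i ω'} := fun i =>
    hℱle i _ (hAmeas i)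
  -- pointwise telescoping identity
  have key : ∀ ω, g (I ω) ω = g 0 ω +
      ∑ i ∈ Finset.range r,
        Set.indicator {ω' | T < V i ω'} (fun ω' => g (i+1) ω' - g i ω') ω := by
    intro ω
    have hsum : ∑ i ∈ Finset.range r,
        Set.indicator {ω' | T < V i ω'} (fun ω' => g (i+1) ω' - g i ω') ω
        = ∑ i ∈ Finset.range (I ω), (g (i+1) ω - g i ω) := by
      rw [← Finset.sum_subset (Finset.range_subset_range.2 (hIr ω))]
      · exact Finset.sum_congr rfl fun i hi =>
          Set.indicator_of_mem ((hmem_iff i ω).2 (Finset.mem_range.1 hi)) _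
      · intro i _ hi
        exact Set.indicator_of_notMem
          (fun h => hi (Finset.mem_range.2 ((hmem_iff i ω).1 h))) _
    rw [hsum, Finset.sum_range_sub (fun i => g i ω)]
    ring
  have hind_int : ∀ i : ℕ, Integrable
      (Set.indicator {ω' | T < V i ω'} (fun ω' => g (i+1) ω' - g i ω')) μ :=
    fun i => (hdint i).indicator (hAmeas0 i)
  -- each indicator term has nonnegative integral
  have hterm : ∀ i ∈ Finset.range r,
      0 ≤ ∫ ω, Set.indicator {ω' | T < V i ω'} (fun ω' => g (i+1) ω' - g i ω') ω ∂μ := by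
    intro i hi
    have hir : i < r := Finset.mem_range.1 hi
    have hrpos : (0:ℝ) < (r:ℝ) - ((((i+1:ℕ)):ℝ) - 1) := by
      push_cast
      have : (i:ℝ) + 1 ≤ (r:ℝ) := by exact_mod_cast hir
      linarith
    have hg' := hgain (i+1) (by omega) (by omega)
    have hl' := hloss (i+1) (by omega) (by omega)
    simp only [Nat.add_sub_cancel] at hg' hl'
    -- conditional expectation linearity
    have hdOint : Integrable (fun ω => fOs (i+1) ω - fOs i ω) μ :=
      (hintO (i+1)).sub (hintO i)
    have hdPint : Integrable (fun ω => fP (i+1) ω - fP i ω) μ :=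
      (hintP (i+1)).sub (hintP i)
    have heqd : (fun ω => g (i+1) ω - g i ω)
        = (Real.exp 1 - 1) • (fun ω => fOs (i+1) ω - fOs i ω)
          + (fun ω => fP (i+1) ω - fP i ω) := by
      funext ω
      simp only [hg, Pi.add_apply, Pi.smul_apply, smul_eq_mul]
      ring
    have hadd : μ[fun ω => g (i+1) ω - g i ω | ℱ i]
        =ᵐ[μ] (Real.exp 1 - 1) • (μ[fun ω => fOs (i+1) ω - fOs i ω | ℱ i])
          + (μ[fun ω => fP (i+1) ω - fP i ω | ℱ i]) := by
      rw [heqd]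
      refine (condExp_add (hdOint.smul _) hdPint _).trans ?_
      exact Filter.EventuallyEq.add (condExp_smul _ _ _) Filter.EventuallyEq.rfl
    have hnegO : (fun ω => fOs (i+1) ω - fOs i ω)
        = -(fun ω => fOs i ω - fOs (i+1) ω) := by
      funext ω; simp
    have hneg : μ[fun ω => fOs (i+1) ω - fOs i ω | ℱ i]
        =ᵐ[μ] -(μ[fun ω => fOs i ω - fOs (i+1) ω | ℱ i]) := by
      rw [hnegO]; exact condExp_neg _ _
    rw [integral_indicator (hAmeas0 i),
        ← setIntegral_condExp (hℱle i) (hdint i) (hAmeas i)]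
    refine setIntegral_nonneg_ae (hAmeas0 i) ?_
    filter_upwards [hg', hl', hadd, hneg] with ω hga hlo haddω hnegω hmemω
    have hVT : T < V i ω := hmemω
    set c : ℝ := (r:ℝ) - ((((i+1:ℕ)):ℝ) - 1) with hc
    have hEO : -(fOpt / c) ≤ (μ[fun ω => fOs (i+1) ω - fOs i ω | ℱ i]) ω := by
      rw [hnegω]
      simp only [Pi.neg_apply]
      linarith [hlo]
    have hEP : (1 - δ) * V i ω / c ≤ (μ[fun ω => fP (i+1) ω - fP i ω | ℱ i]) ω := hga
    have hnum : 0 ≤ ((1 - δ) * V i ω - (Real.exp 1 - 1) * fOpt) / c := by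
      apply div_nonneg _ hrpos.le
      nlinarith [hVT, hTfOpt, hδpos]
    have hring : ((1 - δ) * V i ω - (Real.exp 1 - 1) * fOpt) / c
        = (1 - δ) * V i ω / c + (Real.exp 1 - 1) * (-(fOpt / c)) := by ring
    have hmul : (Real.exp 1 - 1) * (-(fOpt / c))
        ≤ (Real.exp 1 - 1) * (μ[fun ω => fOs (i+1) ω - fOs i ω | ℱ i]) ω :=
      mul_le_mul_of_nonneg_left hEO he1.le
    rw [haddω]
    simp only [Pi.add_apply, Pi.smul_apply, smul_eq_mul]
    linarith [hnum, hring.le, hring.symm.le, hmul, hEP]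
  -- main inequality
  have hmain : (Real.exp 1 - 1) * fOpt + fEmpty ≤ ∫ ω, g (I ω) ω ∂μ := by
    have hrw : (fun ω => g (I ω) ω)
        = fun ω => g 0 ω + ∑ i ∈ Finset.range r,
            Set.indicator {ω' | T < V i ω'} (fun ω' => g (i+1) ω' - g i ω') ω :=
      funext key
    rw [hrw, integral_add (hgint 0) (integrable_finset_sum _ fun i _ => hind_int i),
        integral_finset_sum _ fun i _ => hind_int i]
    have hg0 : ∫ ω, g 0 ω ∂μ = (Real.exp 1 - 1) * fOpt + fEmpty := by
      simp [hg, hO0, hP0]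
    rw [hg0]
    linarith [Finset.sum_nonneg hterm]
  constructor
  · exact hmain
  · have hepos' : (0:ℝ) ≤ 1 / Real.exp 1 := by positivity
    have heq2 : ∫ ω, ((1 - 1 / Real.exp 1) * fOs (I ω) ω + (1 / Real.exp 1) * fP (I ω) ω) ∂μ
        = (1 / Real.exp 1) * ∫ ω, g (I ω) ω ∂μ := by
      rw [← integral_const_mul]
      congr 1
      funext ω
      simp only [hg]
      field_simp
    have hkey : (1 / Real.exp 1) * (Real.exp 1 - 1) * fOpt = (1 - 1 / Real.exp 1) * fOpt := by
      field_simp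
    have hfE : 0 ≤ (1 / Real.exp 1) * fEmpty := mul_nonneg hepos' hfEmpty
    calc (1 - 1 / Real.exp 1) * fOpt
        ≤ (1 / Real.exp 1) * ((Real.exp 1 - 1) * fOpt + fEmpty) := by nlinarith [hkey, hfE]
      _ ≤ (1 / Real.exp 1) * ∫ ω, g (I ω) ω ∂μ :=
          mul_le_mul_of_nonneg_left hmain hepos'
      _ = ∫ ω, ((1 - 1 / Real.exp 1) * fOs (I ω) ω + (1 / Real.exp 1) * fP (I ω) ω) ∂μ :=
          heq2.symm
end
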